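/- Let A₁,…,A_m be nonnegative n×n matrices and for each j let P_j = A_j ⊗ A_{j+1} ⊗ ⋯ ⊗ A_m ⊗ A₁ ⊗ ⋯ ⊗ A_{j-1} (cyclic max-algebra product). Then for every index i: r_{e_i}(A₁ ∘ ⋯ ∘ A_m) ≤ r_{e_i}(P₁ ∘ ⋯ ∘ P_m)^{1/m} ≤ (r_{e_i}(P₁) ⋯ r_{e_i}(P_m))^{1/m}. -/

import Mathlib

open Filter Finset

noncomputable section

/-- Max-algebra product of matrices: `(A ⊗ B) i j = max_l A i l * B l j`. -/
def maxMul {n : ℕ} (A B : Matrix (Fin n) (Fin n) ℝ) : Matrix (Fin n) (Fin n) ℝ :=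
  fun i j => ⨆ l, A i l * B l j

/-- Max-algebra powers `A^k_⊗`. -/
def maxPow {n : ℕ} (A : Matrix (Fin n) (Fin n) ℝ) : ℕ → Matrix (Fin n) (Fin n) ℝ
  | 0 => fun i j => if i = j then 1 else 0
  | k + 1 => maxMul (maxPow A k) A

/-- Max-algebra action of a matrix on a vector: `(A ⊗ x) i = max_j A i j * x j`. -/
def maxVecMul {n : ℕ} (A : Matrix (Fin n) (Fin n) ℝ) (x : Fin n → ℝ) : Fin n → ℝ :=
  fun i => ⨆ j, A i j * x j

/-- Max norm of a vector: `‖x‖ = max_i x i`. -/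
def vnorm {n : ℕ} (x : Fin n → ℝ) : ℝ := ⨆ i, x i

/-- Max entry norm of a matrix: `‖A‖ = max_{i,j} A i j`. -/
def matNorm {n : ℕ} (A : Matrix (Fin n) (Fin n) ℝ) : ℝ := ⨆ i, ⨆ j, A i j

/-- Max-algebra local spectral radius `r_x(A) = lim_k ‖A^k_⊗ ⊗ x‖^{1/k}`
(the limit exists, so we may define it as the `limsup`). -/
def rloc {n : ℕ} (A : Matrix (Fin n) (Fin n) ℝ) (x : Fin n → ℝ) : ℝ :=
  Filter.atTop.limsup fun k : ℕ => (vnorm (maxVecMul (maxPow A k) x)) ^ ((k : ℝ)⁻¹)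

/-- Classical local spectral radius `ρ_x(A) = limsup_k ‖A^k x‖^{1/k}`. -/
def rhox {n : ℕ} (A : Matrix (Fin n) (Fin n) ℝ) (x : Fin n → ℝ) : ℝ :=
  Filter.atTop.limsup fun k : ℕ => (vnorm ((A ^ k).mulVec x)) ^ ((k : ℝ)⁻¹)

/-- Hadamard (entrywise) power `A^{(t)} = [a_{ij}^t]`. -/
def hadPow {n : ℕ} (A : Matrix (Fin n) (Fin n) ℝ) (t : ℝ) : Matrix (Fin n) (Fin n) ℝ :=
  fun i j => (A i j) ^ t

/-- The `i`-th standard basis vector. -/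
def e {n : ℕ} (i : Fin n) : Fin n → ℝ := fun j => if j = i then 1 else 0

end
/-- Max-algebra product of a list of matrices (left-associated; empty list gives the
max-algebra identity). -/
noncomputable def maxProdList {n : ℕ} : List (Matrix (Fin n) (Fin n) ℝ) → Matrix (Fin n) (Fin n) ℝ
  | [] => fun i j => if i = j then 1 else 0
  | M :: L => L.foldl maxMul M

/-- Cyclic max-algebra product `P_j = A_j ⊗ A_{j+1} ⊗ ⋯ ⊗ A_m ⊗ A_1 ⊗ ⋯ ⊗ A_{j-1}`. -/
noncomputable def cycMax {n m : ℕ} (A : Fin m → Matrix (Fin n) (Fin n) ℝ) (j : Fin m) :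
    Matrix (Fin n) (Fin n) ℝ :=
  maxProdList (List.ofFn fun t : Fin m => A (j + t))

namespace Stmt14Aux

open Filter Finset

set_option linter.unusedSectionVars false

open Fin.NatCast

variable {n : ℕ}

lemma bddA (f : Fin n → ℝ) : BddAbove (Set.range f) := (Set.finite_range f).bddAbove

lemma le_sup (f : Fin n → ℝ) (l : Fin n) : f l ≤ ⨆ t, f t := le_ciSup (bddA f) l

lemma maxMul_nonneg {A B : Matrix (Fin n) (Fin n) ℝ} (hA : ∀ p q, 0 ≤ A p q)
    (hB : ∀ p q, 0 ≤ B p q) (p q : Fin n) : 0 ≤ maxMul A B p q :=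
  Real.iSup_nonneg fun l => mul_nonneg (hA p l) (hB l q)

lemma maxPow_nonneg {A : Matrix (Fin n) (Fin n) ℝ} (hA : ∀ p q, 0 ≤ A p q) (k : ℕ)
    (p q : Fin n) : 0 ≤ maxPow A k p q := by
  induction k generalizing p q with
  | zero => simp only [maxPow]; split <;> norm_num
  | succ k ih => exact maxMul_nonneg ih hA p q

section NE
variable [Nonempty (Fin n)]

lemma maxMul_mono {A A' B B' : Matrix (Fin n) (Fin n) ℝ} (hB : ∀ p q, 0 ≤ B p q)
    (hA' : ∀ p q, 0 ≤ A' p q) (h1 : ∀ p q, A p q ≤ A' p q) (h2 : ∀ p q, B p q ≤ B' p q)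
    (p q : Fin n) : maxMul A B p q ≤ maxMul A' B' p q :=
  ciSup_le fun l => le_trans (mul_le_mul (h1 p l) (h2 l q) (hB l q) (hA' p l))
    (le_sup (fun l => A' p l * B' l q) l)

lemma sup_mul_right (f : Fin n → ℝ) {a : ℝ} (ha : 0 ≤ a) :
    (⨆ l, f l) * a = ⨆ l, f l * a := by
  obtain ⟨l0, hl0⟩ := Finite.exists_max f
  have h1 : (⨆ l, f l) = f l0 := le_antisymm (ciSup_le hl0) (le_sup f l0)
  apply le_antisymm
  · rw [h1]; exact le_sup (fun l => f l * a) l0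
  · exact ciSup_le fun l => mul_le_mul_of_nonneg_right (le_trans (hl0 l) h1.ge) ha

lemma mul_sup_left (f : Fin n → ℝ) {a : ℝ} (ha : 0 ≤ a) :
    a * (⨆ l, f l) = ⨆ l, a * f l := by
  rw [mul_comm, sup_mul_right f ha]
  exact iSup_congr fun l => mul_comm _ _

lemma sup_comm' (f : Fin n → Fin n → ℝ) :
    (⨆ l, ⨆ t, f l t) = ⨆ t, ⨆ l, f l t := by
  apply le_antisymm
  · exact ciSup_le fun l => ciSup_le fun t =>
      le_trans (le_sup (fun l' => f l' t) l) (le_sup (fun t' => ⨆ l', f l' t') t)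
  · exact ciSup_le fun t => ciSup_le fun l =>
      le_trans (le_sup (fun t' => f l t') t) (le_sup (fun l' => ⨆ t', f l' t') l)

lemma maxMul_assoc {A B C : Matrix (Fin n) (Fin n) ℝ} (hA : ∀ p q, 0 ≤ A p q)
    (hC : ∀ p q, 0 ≤ C p q) :
    maxMul (maxMul A B) C = maxMul A (maxMul B C) := by
  funext p q
  show (⨆ l, (⨆ t, A p t * B t l) * C l q) = ⨆ t, A p t * ⨆ l, B t l * C l q
  have h1 : ∀ l, (⨆ t, A p t * B t l) * C l q = ⨆ t, A p t * B t l * C l q :=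
    fun l => sup_mul_right _ (hC l q)
  have h2 : ∀ t, A p t * (⨆ l, B t l * C l q) = ⨆ l, A p t * (B t l * C l q) :=
    fun t => mul_sup_left _ (hA p t)
  simp only [h1, h2, mul_assoc]
  exact sup_comm' _

lemma maxMul_id {M : Matrix (Fin n) (Fin n) ℝ} (hM : ∀ p q, 0 ≤ M p q) :
    maxMul M (fun i j => if i = j then (1:ℝ) else 0) = M := by
  funext p q
  apply le_antisymm
  · refine ciSup_le fun l => ?_
    by_cases h : l = q
    · subst h; simp
    · simp [h, hM p q]
  · refine le_trans ?_ (le_sup (fun l => M p l * if l = q then (1:ℝ) else 0) q)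
    simp

lemma maxPow_zero_eq (B : Matrix (Fin n) (Fin n) ℝ) :
    maxPow B 0 = fun i j => if i = j then (1:ℝ) else 0 := rfl

lemma maxPow_add {B : Matrix (Fin n) (Fin n) ℝ} (hB : ∀ p q, 0 ≤ B p q) (a b : ℕ) :
    maxPow B (a + b) = maxMul (maxPow B a) (maxPow B b) := by
  induction b with
  | zero => rw [maxPow_zero_eq, maxMul_id (maxPow_nonneg hB a), Nat.add_zero]
  | succ b ih =>
    show maxMul (maxPow B (a + b)) B = _
    rw [ih, maxMul_assoc (maxPow_nonneg hB a) hB]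
    rfl

lemma maxPow_mul {B : Matrix (Fin n) (Fin n) ℝ} (hB : ∀ p q, 0 ≤ B p q) (m k : ℕ) :
    maxPow B (k * m) = maxPow (maxPow B m) k := by
  induction k with
  | zero => rw [Nat.zero_mul]; rfl
  | succ k ih => rw [Nat.succ_mul, maxPow_add hB, ih]; rfl

lemma maxPow_mono {B C : Matrix (Fin n) (Fin n) ℝ} (hB : ∀ p q, 0 ≤ B p q)
    (hC : ∀ p q, 0 ≤ C p q) (h : ∀ p q, B p q ≤ C p q) (k : ℕ) :
    ∀ p q, maxPow B k p q ≤ maxPow C k p q := by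
  induction k with
  | zero => exact fun p q => le_refl _
  | succ k ih => exact maxMul_mono hB (maxPow_nonneg hC k) ih h

lemma entry_le_matNorm (M : Matrix (Fin n) (Fin n) ℝ) (p q : Fin n) : M p q ≤ matNorm M :=
  le_trans (le_sup (fun q => M p q) q) (le_sup (fun p => ⨆ q, M p q) p)

lemma maxPow_entry_le {M : Matrix (Fin n) (Fin n) ℝ} (hM : ∀ p q, 0 ≤ M p q) (k : ℕ)
    (p q : Fin n) : maxPow M k p q ≤ (max 1 (matNorm M)) ^ k := by
  induction k generalizing p q with
  | zero => simp only [maxPow, pow_zero]; split <;> norm_num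
  | succ k ih =>
    refine ciSup_le fun l => ?_
    calc maxPow M k p l * M l q ≤ (max 1 (matNorm M)) ^ k * max 1 (matNorm M) :=
          mul_le_mul (ih p l) (le_trans (entry_le_matNorm M l q) (le_max_right _ _)) (hM l q)
            (pow_nonneg (le_trans zero_le_one (le_max_left _ _)) k)
      _ = (max 1 (matNorm M)) ^ (k + 1) := (pow_succ _ _).symm

lemma maxPow_chain {B : Matrix (Fin n) (Fin n) ℝ} (hB : ∀ p q, 0 ≤ B p q) (k : ℕ)
    (p q : Fin n) :
    ∃ s : ℕ → Fin n, s k = q ∧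
      maxPow B k p q ≤
        (if s 0 = p then (1:ℝ) else 0) * ∏ t ∈ Finset.range k, B (s t) (s (t + 1)) := by
  induction k generalizing q with
  | zero =>
    refine ⟨fun _ => q, rfl, ?_⟩
    simp only [maxPow, Finset.range_zero, Finset.prod_empty, mul_one]
    by_cases h : p = q
    · subst h; simp
    · simp [h, Ne.symm h]
  | succ k ih =>
    obtain ⟨l0, hl0⟩ := Finite.exists_max (fun l => maxPow B k p l * B l q)
    obtain ⟨s, hsk, hs⟩ := ih l0
    refine ⟨fun t => if t = k + 1 then q else s t, by simp, ?_⟩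
    have h1 : maxPow B (k + 1) p q ≤ maxPow B k p l0 * B l0 q := ciSup_le hl0
    have h2 : maxPow B k p l0 * B l0 q ≤
        ((if s 0 = p then (1:ℝ) else 0) * ∏ t ∈ Finset.range k, B (s t) (s (t + 1))) * B l0 q :=
      mul_le_mul_of_nonneg_right hs (hB l0 q)
    refine le_trans h1 (le_trans h2 (le_of_eq ?_))
    have hprod : (∏ t ∈ Finset.range (k + 1),
        B (if t = k + 1 then q else s t) (if t + 1 = k + 1 then q else s (t + 1)))
        = (∏ t ∈ Finset.range k, B (s t) (s (t + 1))) * B l0 q := by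
      rw [Finset.prod_range_succ]
      congr 1
      · refine Finset.prod_congr rfl fun t ht => ?_
        have := Finset.mem_range.1 ht
        rw [if_neg (by omega), if_neg (by omega)]
      · rw [if_neg (by omega), if_pos rfl, hsk]
    simp only []
    rw [hprod]
    have h0 : ¬ ((0:ℕ) = k + 1) := by omega
    simp only [if_neg h0, mul_assoc]

lemma getD_nonneg : ∀ (L : List (Matrix (Fin n) (Fin n) ℝ)),
    (∀ N ∈ L, ∀ p q, 0 ≤ N p q) → ∀ (t : ℕ) (p q : Fin n), 0 ≤ (L.getD t 0) p q
  | [], _, t, p, q => by simp [List.getD]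
  | N :: L, h, 0, p, q => by simpa using h N (List.mem_cons_self) p q
  | N :: L, h, t + 1, p, q => by
    simpa using getD_nonneg L (fun N' hN' => h N' (List.mem_cons_of_mem _ hN')) t p q

lemma foldl_nonneg : ∀ (L : List (Matrix (Fin n) (Fin n) ℝ)) (M : Matrix (Fin n) (Fin n) ℝ),
    (∀ p q, 0 ≤ M p q) → (∀ N ∈ L, ∀ p q, 0 ≤ N p q) →
    ∀ p q, 0 ≤ (L.foldl maxMul M) p q
  | [], M, hM, _, p, q => hM p q
  | N :: L, M, hM, hL, p, q =>
    foldl_nonneg L (maxMul M N) (maxMul_nonneg hM (hL N (List.mem_cons_self)))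
      (fun N' hN' => hL N' (List.mem_cons_of_mem _ hN')) p q

lemma maxProdList_nonneg (L : List (Matrix (Fin n) (Fin n) ℝ))
    (hL : ∀ N ∈ L, ∀ p q, 0 ≤ N p q) : ∀ p q, 0 ≤ maxProdList L p q := by
  cases L with
  | nil =>
    intro p q
    simp only [maxProdList]
    split <;> norm_num
  | cons N L =>
    exact foldl_nonneg L N (hL N (List.mem_cons_self))
      (fun N' hN' => hL N' (List.mem_cons_of_mem _ hN'))

lemma foldl_chain : ∀ (L : List (Matrix (Fin n) (Fin n) ℝ)) (M : Matrix (Fin n) (Fin n) ℝ),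
    (∀ p q, 0 ≤ M p q) → (∀ N ∈ L, ∀ p q, 0 ≤ N p q) →
    ∀ (p : Fin n) (s : ℕ → Fin n),
      M p (s 0) * ∏ t ∈ Finset.range L.length, (L.getD t 0) (s t) (s (t + 1)) ≤
        (L.foldl maxMul M) p (s L.length)
  | [], M, hM, hL, p, s => by simp
  | N :: L, M, hM, hL, p, s => by
    have hN : ∀ p q, 0 ≤ N p q := hL N (List.mem_cons_self)
    have hL' : ∀ N' ∈ L, ∀ p q, 0 ≤ N' p q := fun N' h => hL N' (List.mem_cons_of_mem _ h)
    have key := foldl_chain L (maxMul M N) (maxMul_nonneg hM hN) hL' p (fun t => s (t + 1))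
    refine le_trans ?_ key
    have hprod : (∏ t ∈ Finset.range (L.length + 1), ((N :: L).getD t 0) (s t) (s (t + 1)))
        = N (s 0) (s 1) * ∏ t ∈ Finset.range L.length, (L.getD t 0) (s (t + 1)) (s (t + 2)) := by
      rw [Finset.prod_range_succ']
      simp only [List.getD_cons_succ, List.getD_cons_zero]
      ring
    show M p (s 0) * ∏ t ∈ Finset.range (L.length + 1), ((N :: L).getD t 0) (s t) (s (t + 1)) ≤ _
    rw [hprod, ← mul_assoc]
    refine mul_le_mul_of_nonneg_right ?_
      (Finset.prod_nonneg fun t _ => getD_nonneg L hL' t _ _)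
    exact le_sup (fun l => M p l * N l (s 1)) (s 0)

end NE

section NE2
variable [Nonempty (Fin n)]

lemma cycMax_nonneg {m : ℕ} (A : Fin m → Matrix (Fin n) (Fin n) ℝ)
    (hA : ∀ l p q, 0 ≤ A l p q) (j : Fin m) : ∀ p q, 0 ≤ cycMax A j p q := by
  refine maxProdList_nonneg _ ?_
  intro N hN
  rw [List.mem_ofFn] at hN
  obtain ⟨t, rfl⟩ := hN
  exact hA _

lemma chain_le_cycMax {m' : ℕ} (A : Fin (m' + 1) → Matrix (Fin n) (Fin n) ℝ)
    (hA : ∀ l p q, 0 ≤ A l p q) (j : Fin (m' + 1)) (s : ℕ → Fin n) (p q : Fin n)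
    (h0 : s 0 = p) (hend : s (m' + 1) = q) :
    ∏ t ∈ Finset.range (m' + 1), A (j + (t : Fin (m' + 1))) (s t) (s (t + 1)) ≤
      cycMax A j p q := by
  have hof : cycMax A j
      = (List.ofFn fun i : Fin m' => A (j + i.succ)).foldl maxMul (A (j + 0)) := by
    rw [cycMax, List.ofFn_succ]; rfl
  have key := foldl_chain (List.ofFn fun i : Fin m' => A (j + i.succ)) (A (j + 0))
      (fun p q => hA _ p q)
      (by
        intro N hN
        rw [List.mem_ofFn] at hN
        obtain ⟨t, rfl⟩ := hN
        exact hA _)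
      p (fun t => s (t + 1))
  rw [List.length_ofFn] at key
  rw [hof, ← hend]
  refine le_trans (le_of_eq ?_) key
  rw [Finset.prod_range_succ']
  have hc0 : ((0 : ℕ) : Fin (m' + 1)) = 0 := by simp
  rw [mul_comm]
  congr 1
  · rw [hc0, h0]
  · refine Finset.prod_congr rfl fun t ht => ?_
    have htm : t < m' := Finset.mem_range.1 ht
    have hgd : ((List.ofFn fun i : Fin m' => A (j + i.succ)).getD t 0)
        = A (j + (⟨t, htm⟩ : Fin m').succ) := by
      rw [List.getD_eq_getElem _ _ (by simpa using htm), List.getElem_ofFn]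
    have hcast : ((t + 1 : ℕ) : Fin (m' + 1)) = (⟨t, htm⟩ : Fin m').succ := by
      apply Fin.ext
      rw [Fin.val_natCast, Nat.mod_eq_of_lt (by omega : t + 1 < m' + 1)]
      simp
    rw [hgd, hcast]

lemma L1 {m' : ℕ} (A : Fin (m' + 1) → Matrix (Fin n) (Fin n) ℝ)
    (hA : ∀ l p q, 0 ≤ A l p q) (p q : Fin n) :
    maxPow (fun p q => ∏ l, A l p q) (m' + 1) p q ≤ ∏ j, cycMax A j p q := by
  have hB : ∀ p q, 0 ≤ (fun p q => ∏ l, A l p q : Matrix (Fin n) (Fin n) ℝ) p q :=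
    fun p q => Finset.prod_nonneg fun l _ => hA l p q
  obtain ⟨s, hsm, hs⟩ := maxPow_chain hB (m' + 1) p q
  by_cases h0 : s 0 = p
  · rw [if_pos h0, one_mul] at hs
    have hBig : (∏ t ∈ Finset.range (m' + 1), ∏ l, A l (s t) (s (t + 1)))
        = ∏ j : Fin (m' + 1), ∏ t ∈ Finset.range (m' + 1),
            A (j + (t : Fin (m' + 1))) (s t) (s (t + 1)) := by
      have hstep : ∀ t : ℕ, (∏ l, A l (s t) (s (t + 1)))
          = ∏ j, A (j + (t : Fin (m' + 1))) (s t) (s (t + 1)) := fun t =>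
        (Fintype.prod_equiv (Equiv.addRight ((t : Fin (m' + 1))))
          (fun j => A (j + (t : Fin (m' + 1))) (s t) (s (t + 1)))
          (fun l => A l (s t) (s (t + 1)))
          (fun j => by rw [Equiv.coe_addRight])).symm
      rw [Finset.prod_congr rfl fun t _ => hstep t]
      exact Finset.prod_comm
    refine le_trans (le_trans hs (le_of_eq hBig)) ?_
    refine Finset.prod_le_prod (fun j _ => Finset.prod_nonneg fun t _ => hA _ _ _)
      (fun j _ => chain_le_cycMax A hA j s p q h0 hsm)
  · refine le_trans hs ?_
    rw [if_neg h0, zero_mul]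
    exact Finset.prod_nonneg fun j _ => cycMax_nonneg A hA j p q

lemma L2 {m : ℕ} (P : Fin m → Matrix (Fin n) (Fin n) ℝ) (hP : ∀ j p q, 0 ≤ P j p q) (k : ℕ) :
    ∀ p q, maxPow (fun p q => ∏ j, P j p q) k p q ≤ ∏ j, maxPow (P j) k p q := by
  induction k with
  | zero =>
    intro p q
    simp only [maxPow]
    split
    · simp
    · exact Finset.prod_nonneg fun j _ => by norm_num
  | succ k ih =>
    intro p q
    refine ciSup_le fun l => ?_
    calc maxPow (fun p q => ∏ j, P j p q) k p l * (∏ j, P j l q)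
        ≤ (∏ j, maxPow (P j) k p l) * ∏ j, P j l q :=
          mul_le_mul_of_nonneg_right (ih p l) (Finset.prod_nonneg fun j _ => hP j l q)
      _ = ∏ j, maxPow (P j) k p l * P j l q := (Finset.prod_mul_distrib).symm
      _ ≤ ∏ j, maxPow (P j) (k + 1) p q :=
          Finset.prod_le_prod (fun j _ => mul_nonneg (maxPow_nonneg (hP j) k p l) (hP j l q))
            (fun j _ => le_sup (fun l => maxPow (P j) k p l * P j l q) l)

lemma vnorm_maxVecMul_e {M : Matrix (Fin n) (Fin n) ℝ} (hM : ∀ p q, 0 ≤ M p q) (i : Fin n) :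
    vnorm (maxVecMul M (e i)) = ⨆ p, M p i := by
  refine iSup_congr fun p => ?_
  show (⨆ j, M p j * e i j) = M p i
  apply le_antisymm
  · refine ciSup_le fun j => ?_
    by_cases h : j = i
    · subst h; simp [e]
    · simp [e, h, hM p i]
  · refine le_trans ?_ (le_sup (fun j => M p j * e i j) i)
    simp [e]

lemma rloc_eq {M : Matrix (Fin n) (Fin n) ℝ} (hM : ∀ p q, 0 ≤ M p q) (i : Fin n) :
    rloc M (e i) = Filter.atTop.limsup fun k : ℕ => (⨆ p, maxPow M k p i) ^ ((k : ℝ)⁻¹) := by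
  unfold rloc
  congr 1
  funext k
  rw [vnorm_maxVecMul_e (maxPow_nonneg hM k) i]

lemma rpow_natpow_inv {x : ℝ} (hx : 0 ≤ x) {k : ℕ} (hk : k ≠ 0) :
    ((x ^ k : ℝ)) ^ ((k : ℝ)⁻¹) = x := by
  rw [← Real.rpow_natCast x k, ← Real.rpow_mul hx,
    mul_inv_cancel₀ (Nat.cast_ne_zero.2 hk), Real.rpow_one]

lemma rpow_inv_natpow {x : ℝ} (hx : 0 ≤ x) {k : ℕ} (hk : k ≠ 0) :
    ((x ^ ((k : ℝ)⁻¹) : ℝ)) ^ (k : ℕ) = x := by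
  rw [← Real.rpow_natCast (x ^ ((k : ℝ)⁻¹)) k, ← Real.rpow_mul hx,
    inv_mul_cancel₀ (Nat.cast_ne_zero.2 hk), Real.rpow_one]

lemma useq_nonneg {M : Matrix (Fin n) (Fin n) ℝ} (hM : ∀ p q, 0 ≤ M p q) (i : Fin n) (k : ℕ) :
    0 ≤ (⨆ p, maxPow M k p i) ^ ((k : ℝ)⁻¹) :=
  Real.rpow_nonneg (Real.iSup_nonneg fun p => maxPow_nonneg hM k p i) _

lemma useq_le {M : Matrix (Fin n) (Fin n) ℝ} (hM : ∀ p q, 0 ≤ M p q) (i : Fin n) (k : ℕ) :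
    (⨆ p, maxPow M k p i) ^ ((k : ℝ)⁻¹) ≤ max 1 (matNorm M) := by
  have hN1 : (1:ℝ) ≤ max 1 (matNorm M) := le_max_left _ _
  rcases Nat.eq_zero_or_pos k with rfl | hk
  · simpa using hN1
  · have h0 : 0 ≤ ⨆ p, maxPow M k p i := Real.iSup_nonneg fun p => maxPow_nonneg hM k p i
    have h1 : (⨆ p, maxPow M k p i) ≤ (max 1 (matNorm M)) ^ k :=
      ciSup_le fun p => maxPow_entry_le hM k p i
    calc (⨆ p, maxPow M k p i) ^ ((k : ℝ)⁻¹)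
        ≤ ((max 1 (matNorm M)) ^ k) ^ ((k : ℝ)⁻¹) :=
          Real.rpow_le_rpow h0 h1 (by positivity)
      _ = max 1 (matNorm M) := rpow_natpow_inv (le_trans zero_le_one hN1) hk.ne'

end NE2

lemma bdd_limsup {u : ℕ → ℝ} {N : ℝ} (h0 : ∀ k, 0 ≤ u k) (hN : ∀ k, u k ≤ N) :
    Filter.IsBoundedUnder (· ≤ ·) Filter.atTop u ∧
      Filter.IsCoboundedUnder (· ≤ ·) Filter.atTop u ∧ 0 ≤ Filter.atTop.limsup u := by
  have hb : Filter.IsBoundedUnder (· ≤ ·) Filter.atTop u :=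
    ⟨N, Filter.eventually_map.2 (Filter.Eventually.of_forall hN)⟩
  exact ⟨hb, Filter.isCoboundedUnder_le_of_eventually_le Filter.atTop
      (Filter.Eventually.of_forall h0),
    Filter.le_limsup_of_frequently_le (Filter.Frequently.of_forall h0) hb⟩

lemma part2_analytic {ι : Type*} [Fintype ι] {u : ℕ → ℝ} {v : ι → ℕ → ℝ}
    (hco : Filter.IsCoboundedUnder (· ≤ ·) Filter.atTop u)
    (hvbdd : ∀ j, Filter.IsBoundedUnder (· ≤ ·) Filter.atTop (v j))
    (hv0 : ∀ j k, 0 ≤ v j k)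
    (huv : ∀ k, u k ≤ ∏ j, v j k) :
    Filter.atTop.limsup u ≤ ∏ j, Filter.atTop.limsup (v j) := by
  have key : ∀ ε : ℝ, 0 < ε →
      Filter.atTop.limsup u ≤ ∏ j, (Filter.atTop.limsup (v j) + ε) := by
    intro ε hε
    have hev : ∀ᶠ k in Filter.atTop, ∀ j, v j k < Filter.atTop.limsup (v j) + ε :=
      Filter.eventually_all.2 fun j =>
        Filter.eventually_lt_of_limsup_lt (by linarith) (hvbdd j)
    refine Filter.limsup_le_of_le hco (hev.mono fun k hk => ?_)
    exact le_trans (huv k)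
      (Finset.prod_le_prod (fun j _ => hv0 j k) (fun j _ => (hk j).le))
  have hcont : Filter.Tendsto (fun ε : ℝ => ∏ j, (Filter.atTop.limsup (v j) + ε))
      (nhdsWithin 0 (Set.Ioi 0)) (nhds (∏ j, Filter.atTop.limsup (v j))) := by
    have hcont0 : Continuous fun ε : ℝ => ∏ j, (Filter.atTop.limsup (v j) + ε) :=
      continuous_finset_prod _ fun j _ => continuous_const.add continuous_id
    have h2 := hcont0.tendsto 0
    simp only [add_zero] at h2
    exact h2.mono_left nhdsWithin_le_nhds
  exact ge_of_tendsto hcont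
    (Filter.eventually_of_mem self_mem_nhdsWithin fun ε hε => key ε hε)

lemma part1_analytic {β γ : ℕ → ℝ} {K : ℝ} (m : ℕ) (hm : 0 < m)
    (hβ0 : ∀ k, 0 ≤ β k) (hγ0 : ∀ k, 0 ≤ γ k) (hK : 1 ≤ K)
    (hco : Filter.IsCoboundedUnder (· ≤ ·) Filter.atTop (fun k : ℕ => β k ^ ((k : ℝ)⁻¹)))
    (hγbdd : Filter.IsBoundedUnder (· ≤ ·) Filter.atTop (fun k : ℕ => γ k ^ ((k : ℝ)⁻¹)))
    (hγnn : 0 ≤ Filter.atTop.limsup (fun k : ℕ => γ k ^ ((k : ℝ)⁻¹)))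
    (hrel : ∀ j : ℕ, β j ≤ K * γ (j / m)) :
    Filter.atTop.limsup (fun k : ℕ => β k ^ ((k : ℝ)⁻¹)) ≤
      (Filter.atTop.limsup (fun k : ℕ => γ k ^ ((k : ℝ)⁻¹))) ^ ((m : ℝ)⁻¹) := by
  set L := Filter.atTop.limsup (fun k : ℕ => γ k ^ ((k : ℝ)⁻¹)) with hLdef
  have hmain : ∀ ε : ℝ, 0 < ε →
      Filter.atTop.limsup (fun k : ℕ => β k ^ ((k : ℝ)⁻¹)) ≤ (L + ε) ^ ((m : ℝ)⁻¹) := by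
    intro ε hε
    have hLε : 0 < L + ε := by linarith
    set μ := (L + ε) ^ ((m : ℝ)⁻¹) with hμdef
    have hμpos : 0 < μ := Real.rpow_pos_of_pos hLε _
    have hμm : μ ^ m = L + ε := by
      rw [hμdef, ← Real.rpow_natCast ((L + ε) ^ ((m : ℝ)⁻¹)) m, ← Real.rpow_mul hLε.le,
        inv_mul_cancel₀ (Nat.cast_ne_zero.2 hm.ne'), Real.rpow_one]
    have hev : ∀ᶠ k in Filter.atTop, γ k ^ ((k : ℝ)⁻¹) < L + ε :=
      Filter.eventually_lt_of_limsup_lt (by linarith) hγbdd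
    have hev2 : ∀ᶠ k in Filter.atTop, γ k ≤ (L + ε) ^ k := by
      filter_upwards [hev, Filter.eventually_ge_atTop 1] with k hk hk1
      have h1 : (γ k ^ ((k : ℝ)⁻¹)) ^ (k : ℕ) ≤ (L + ε) ^ (k : ℕ) :=
        pow_le_pow_left₀ (Real.rpow_nonneg (hγ0 k) _) hk.le k
      rwa [rpow_inv_natpow (hγ0 k) (by omega)] at h1
    obtain ⟨k₀, hk₀⟩ := Filter.eventually_atTop.1 hev2
    set Mx := max 1 ((μ⁻¹) ^ m) with hMxdef
    have hMx1 : (1 : ℝ) ≤ Mx := le_max_left _ _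
    set C₁ := K * Mx with hC₁def
    have hC₁1 : (1 : ℝ) ≤ C₁ :=
      le_trans hK (le_mul_of_one_le_right (by linarith) hMx1)
    have hC₁pos : (0 : ℝ) < C₁ := lt_of_lt_of_le one_pos hC₁1
    have hbound : ∀ j : ℕ, k₀ ≤ j / m → β j ≤ C₁ * μ ^ j := by
      intro j hj
      have h2 : γ (j / m) ≤ (L + ε) ^ (j / m) := hk₀ _ hj
      have h3 : (L + ε) ^ (j / m) = μ ^ (m * (j / m)) := by rw [pow_mul, hμm]
      have h4 : μ ^ (m * (j / m)) * μ ^ (j % m) = μ ^ j := by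
        rw [← pow_add, Nat.div_add_mod]
      have h5 : μ ^ (m * (j / m)) = μ ^ j * (μ⁻¹) ^ (j % m) := by
        rw [inv_pow, ← div_eq_mul_inv]
        exact eq_div_of_mul_eq (pow_ne_zero _ hμpos.ne') h4
      have h6 : (μ⁻¹) ^ (j % m) ≤ Mx := by
        rcases le_total μ⁻¹ 1 with h | h
        · exact le_trans (pow_le_one₀ (by positivity) h) hMx1
        · exact le_trans (pow_le_pow_right₀ h (le_of_lt (Nat.mod_lt _ hm)))
            (le_max_right _ _)
      calc β j ≤ K * γ (j / m) := hrel j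
        _ ≤ K * (L + ε) ^ (j / m) := mul_le_mul_of_nonneg_left h2 (by linarith)
        _ = K * (μ ^ j * (μ⁻¹) ^ (j % m)) := by rw [h3, h5]
        _ ≤ K * (μ ^ j * Mx) :=
            mul_le_mul_of_nonneg_left
              (mul_le_mul_of_nonneg_left h6 (by positivity)) (by linarith)
        _ = C₁ * μ ^ j := by rw [hC₁def]; ring
    have hev3 : ∀ᶠ j in Filter.atTop, β j ^ ((j : ℝ)⁻¹) ≤ C₁ ^ ((j : ℝ)⁻¹) * μ := by
      filter_upwards [Filter.eventually_ge_atTop (m * k₀ + 1)] with j hj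
      have hj1 : 1 ≤ j := le_trans (Nat.succ_le_succ (Nat.zero_le _)) hj
      have hjdiv : k₀ ≤ j / m := (Nat.le_div_iff_mul_le hm).2
        (le_trans (le_of_eq (mul_comm k₀ m)) (le_trans (Nat.le_succ _) hj))
      have h1 : β j ≤ C₁ * μ ^ j := hbound j hjdiv
      have h2 : β j ^ ((j : ℝ)⁻¹) ≤ (C₁ * μ ^ j) ^ ((j : ℝ)⁻¹) :=
        Real.rpow_le_rpow (hβ0 j) h1 (by positivity)
      refine le_trans h2 (le_of_eq ?_)
      rw [Real.mul_rpow hC₁pos.le (by positivity), rpow_natpow_inv hμpos.le (by omega)]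
    have htend : Filter.Tendsto (fun j : ℕ => C₁ ^ ((j : ℝ)⁻¹) * μ)
        Filter.atTop (nhds μ) := by
      have h1 : Filter.Tendsto (fun j : ℕ => C₁ ^ ((j : ℝ)⁻¹)) Filter.atTop (nhds 1) := by
        have h2 : Filter.Tendsto (fun j : ℕ => Real.log C₁ * (j : ℝ)⁻¹)
            Filter.atTop (nhds 0) := by
          simpa using (tendsto_inv_atTop_nhds_zero_nat).const_mul (Real.log C₁)
        have h3 := (Real.continuous_exp.tendsto 0).comp h2
        simp only [Real.exp_zero] at h3
        refine h3.congr fun j => ?_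
        simp only [Function.comp_apply]
        rw [Real.rpow_def_of_pos hC₁pos]
      simpa using h1.mul_const μ
    calc Filter.atTop.limsup (fun k : ℕ => β k ^ ((k : ℝ)⁻¹))
        ≤ Filter.atTop.limsup (fun j : ℕ => C₁ ^ ((j : ℝ)⁻¹) * μ) :=
          Filter.limsup_le_limsup hev3 hco htend.isBoundedUnder_le
      _ = μ := htend.limsup_eq
  have hcont : Filter.Tendsto (fun ε : ℝ => (L + ε) ^ ((m : ℝ)⁻¹))
      (nhdsWithin 0 (Set.Ioi 0)) (nhds (L ^ ((m : ℝ)⁻¹))) := by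
    have h1 : ContinuousAt (fun x : ℝ => x ^ ((m : ℝ)⁻¹)) L :=
      Real.continuousAt_rpow_const _ _ (Or.inr (by positivity))
    have h2 : Filter.Tendsto (fun ε : ℝ => L + ε) (nhdsWithin 0 (Set.Ioi 0)) (nhds L) := by
      have hcont3 : Continuous (fun ε : ℝ => L + ε) := continuous_const.add continuous_id
      have h3 := hcont3.tendsto (0 : ℝ)
      simp only [add_zero] at h3
      exact h3.mono_left nhdsWithin_le_nhds
    exact h1.tendsto.comp h2
  exact ge_of_tendsto hcont
    (Filter.eventually_of_mem self_mem_nhdsWithin fun ε hε => hmain ε hε)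

end Stmt14Aux

open Stmt14Aux

/-- `r_{e_i}(A₁ ∘ ⋯ ∘ A_m) ≤ r_{e_i}(P₁ ∘ ⋯ ∘ P_m)^{1/m}
≤ (r_{e_i}(P₁) ⋯ r_{e_i}(P_m))^{1/m}`. -/
theorem stmt14 {n m : ℕ} (hm : 0 < m) (A : Fin m → Matrix (Fin n) (Fin n) ℝ)
    (hA : ∀ l i j, 0 ≤ A l i j) (i : Fin n) :
    rloc (fun p q => ∏ l, A l p q) (e i) ≤
      (rloc (fun p q => ∏ j, cycMax A j p q) (e i)) ^ ((m : ℝ)⁻¹) ∧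
    (rloc (fun p q => ∏ j, cycMax A j p q) (e i)) ^ ((m : ℝ)⁻¹) ≤
      (∏ j, rloc (cycMax A j) (e i)) ^ ((m : ℝ)⁻¹) := by
  haveI : Nonempty (Fin n) := ⟨i⟩
  obtain ⟨m', rfl⟩ : ∃ m'', m = m'' + 1 := ⟨m - 1, by omega⟩
  have hB : ∀ p q, 0 ≤ (fun p q => ∏ l, A l p q : Matrix (Fin n) (Fin n) ℝ) p q :=
    fun p q => Finset.prod_nonneg fun l _ => hA l p q
  have hP : ∀ (j : Fin (m' + 1)) (p q : Fin n), 0 ≤ cycMax A j p q :=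
    fun j => cycMax_nonneg A hA j
  have hC : ∀ p q, 0 ≤ (fun p q => ∏ j, cycMax A j p q : Matrix (Fin n) (Fin n) ℝ) p q :=
    fun p q => Finset.prod_nonneg fun j _ => hP j p q
  obtain ⟨hbB, hcoB, hnnB⟩ :=
    bdd_limsup (fun k => useq_nonneg hB i k) (fun k => useq_le hB i k)
  obtain ⟨hbC, hcoC, hnnC⟩ :=
    bdd_limsup (fun k => useq_nonneg hC i k) (fun k => useq_le hC i k)
  have hdP := fun (j : Fin (m' + 1)) =>
    bdd_limsup (fun k => useq_nonneg (hP j) i k) (fun k => useq_le (hP j) i k)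
  have hprodeq : (∏ j, rloc (cycMax A j) (e i)) =
      ∏ j : Fin (m' + 1), Filter.atTop.limsup
        (fun k : ℕ => (⨆ p, maxPow (cycMax A j) k p i) ^ ((k : ℝ)⁻¹)) :=
    Finset.prod_congr rfl fun j _ => rloc_eq (hP j) i
  rw [rloc_eq hB i, rloc_eq hC i, hprodeq]
  -- part 2
  have huv : ∀ k : ℕ,
      (⨆ p, maxPow (fun p q => ∏ j, cycMax A j p q) k p i) ^ ((k : ℝ)⁻¹)
      ≤ ∏ j : Fin (m' + 1), (⨆ p, maxPow (cycMax A j) k p i) ^ ((k : ℝ)⁻¹) := by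
    intro k
    have h1 : (⨆ p, maxPow (fun p q => ∏ j, cycMax A j p q) k p i)
        ≤ ∏ j, ⨆ p, maxPow (cycMax A j) k p i := by
      refine ciSup_le fun p => le_trans (L2 (fun j => cycMax A j) hP k p i) ?_
      exact Finset.prod_le_prod (fun j _ => maxPow_nonneg (hP j) k p i)
        (fun j _ => le_sup (fun p => maxPow (cycMax A j) k p i) p)
    calc (⨆ p, maxPow (fun p q => ∏ j, cycMax A j p q) k p i) ^ ((k : ℝ)⁻¹)
        ≤ ((∏ j, ⨆ p, maxPow (cycMax A j) k p i) : ℝ) ^ ((k : ℝ)⁻¹) :=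
          Real.rpow_le_rpow (Real.iSup_nonneg fun p => maxPow_nonneg hC k p i) h1
            (by positivity)
      _ = ∏ j : Fin (m' + 1), (⨆ p, maxPow (cycMax A j) k p i) ^ ((k : ℝ)⁻¹) :=
          (Real.finset_prod_rpow _ _
            (fun j _ => Real.iSup_nonneg fun p => maxPow_nonneg (hP j) k p i) _).symm
  have key2 := part2_analytic hcoC (fun j => (hdP j).1)
    (fun j k => useq_nonneg (hP j) i k) huv
  -- part 1
  have hBC : ∀ p q, maxPow (fun p q => ∏ l, A l p q) (m' + 1) p q
      ≤ (fun p q => ∏ j, cycMax A j p q : Matrix (Fin n) (Fin n) ℝ) p q := L1 A hA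
  have hK1 : (1:ℝ) ≤ (max 1 (matNorm (fun p q => ∏ l, A l p q))) ^ (m' + 1) :=
    one_le_pow₀ (le_max_left _ _)
  have hrel : ∀ j : ℕ, (⨆ p, maxPow (fun p q => ∏ l, A l p q) j p i)
      ≤ ((max 1 (matNorm (fun p q => ∏ l, A l p q))) ^ (m' + 1)) *
        (⨆ p, maxPow (fun p q => ∏ j, cycMax A j p q) (j / (m' + 1)) p i) := by
    intro j
    have e1 : maxPow (fun p q => ∏ l, A l p q) j
        = maxMul (maxPow (fun p q => ∏ l, A l p q) (j % (m' + 1)))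
            (maxPow (maxPow (fun p q => ∏ l, A l p q) (m' + 1)) (j / (m' + 1))) := by
      conv_lhs => rw [← Nat.mod_add_div' j (m' + 1)]
      rw [maxPow_add hB, maxPow_mul hB]
    refine ciSup_le fun p => ?_
    rw [e1]
    show (⨆ l, maxPow (fun p q => ∏ l, A l p q) (j % (m' + 1)) p l *
        maxPow (maxPow (fun p q => ∏ l, A l p q) (m' + 1)) (j / (m' + 1)) l i) ≤ _
    refine ciSup_le fun l => ?_
    have hR : maxPow (fun p q => ∏ l, A l p q) (j % (m' + 1)) p l
        ≤ (max 1 (matNorm (fun p q => ∏ l, A l p q))) ^ (m' + 1) :=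
      le_trans (maxPow_entry_le hB _ p l)
        (pow_le_pow_right₀ (le_max_left _ _) (le_of_lt (Nat.mod_lt _ (Nat.succ_pos m'))))
    have hQ : maxPow (maxPow (fun p q => ∏ l, A l p q) (m' + 1)) (j / (m' + 1)) l i
        ≤ ⨆ p, maxPow (fun p q => ∏ j, cycMax A j p q) (j / (m' + 1)) p i := by
      refine le_trans ?_
        (le_sup (fun p => maxPow (fun p q => ∏ j, cycMax A j p q) (j / (m' + 1)) p i) l)
      exact maxPow_mono (fun p q => maxPow_nonneg hB _ p q) hC hBC (j / (m' + 1)) l i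
    exact mul_le_mul hR hQ (maxPow_nonneg (fun p q => maxPow_nonneg hB _ p q) _ l i)
      (le_trans zero_le_one hK1)
  have key1 := part1_analytic
    (β := fun k => ⨆ p, maxPow (fun p q => ∏ l, A l p q) k p i)
    (γ := fun k => ⨆ p, maxPow (fun p q => ∏ j, cycMax A j p q) k p i)
    (K := (max 1 (matNorm (fun p q => ∏ l, A l p q))) ^ (m' + 1))
    (m' + 1) (Nat.succ_pos m')
    (fun k => Real.iSup_nonneg fun p => maxPow_nonneg hB k p i)
    (fun k => Real.iSup_nonneg fun p => maxPow_nonneg hC k p i)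
    hK1 hcoB hbC hnnC hrel
  exact ⟨key1, Real.rpow_le_rpow hnnC key2 (by positivity)⟩
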